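/- arXiv:2310.00393 — 2 statements merged into one kernel-verified Lean document; each statement's English description precedes it below -/
import Mathlib

section
/- For every integer d ≥ 3 there exists a constant C(d) > 0 with the following property. For every n ≥ 1, every d-tensor T on ℝ^n, and every degree-(2d) pseudo-expectation L over the hypercube {−1,1}^{dn} in the d·n variables x^{(1)}_1,…,x^{(1)}_n,…,x^{(d)}_1,…,x^{(d)}_n, one has L(∑_{i₁,…,i_d} T_{i₁…i_d} x^{(1)}_{i₁}⋯x^{(d)}_{i_d}) ≤ C(d) · n^{d/2 − 1} · max over x^{(1)},…,x^{(d)} ∈ {−1,1}^n of ∑_{i₁,…,i_d} T_{i₁…i_d} x^{(1)}_{i₁}⋯x^{(d)}_{i_d}. -/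
/-!
Split off the first mode. The objective is `∑ᵢ ∑_g T(i, g) · x⁽¹⁾ᵢ · m_g` with the monomials
`m_g = x⁽²⁾_{g₁} ⋯ x⁽ᵈ⁾_{g_{d-1}}`. The moment matrix of `L` on the `x⁽¹⁾ᵢ` and the `m_g` is positive
semidefinite with unit diagonal (hypercube constraints), so factoring it writes `L f` as a value of
the vector relaxation of the bilinear form `A i g = T(i, g)`, and Grothendieck's inequality bounds it
by `128 · max_{ε,η} ∑ A i g εᵢ η_g`.

For fixed `ε` that maximum is `‖S‖₁` for the `(d-1)`-tensor `S = ∑ᵢ εᵢ T(i, ·)`. Decoupled Rademacher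
chaoses of order `k` are hypercontractive, `𝔼 F⁴ ≤ 3ᵏ (𝔼 F²)²`, which with Hölder gives
`‖S_j‖₂ ≤ 3^{k/2} 𝔼 |F_{S_j}|` for every slice `S_j` of `S`; hence
`‖S‖₁ ≤ (3n)^{(d-2)/2} 𝔼_x ∑_j |F_{S_j}(x)|`. Choosing signs on the second mode turns the sum over
`j` into a value of the decoupled form of `T`, so that mode costs no factor `√n`.
-/

open MvPolynomial Finset
open scoped BigOperators

noncomputable section

namespace DecoupledSoS

variable {ι κ : Type*}

def pmOne (b : Bool) : ℝ := if b then 1 else -1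

@[simp] lemma pmOne_true : pmOne true = 1 := rfl
@[simp] lemma pmOne_false : pmOne false = -1 := rfl

lemma pmOne_mul_le_abs (b : Bool) (t : ℝ) : pmOne b * t ≤ |t| := by
  cases b
  · simpa using neg_le_abs t
  · simpa using le_abs_self t

lemma sum_mul_le_mul_sum_abs [Fintype ι] {c : ℝ} (w b : ι → ℝ) (hb : ∀ i, |b i| ≤ c) :
    ∑ i, w i * b i ≤ c * ∑ i, |w i| := by
  rw [mul_sum]
  refine sum_le_sum fun i _ => ?_
  calc w i * b i ≤ |w i| * |b i| := (le_abs_self _).trans (abs_mul _ _).le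
    _ ≤ c * |w i| := by rw [mul_comm]; exact mul_le_mul_of_nonneg_right (hb i) (abs_nonneg _)

lemma sum_fin_cons {d : ℕ} {β M : Type*} [Fintype β] [AddCommMonoid M]
    (F : (Fin (d + 1) → β) → M) : ∑ g, F g = ∑ b, ∑ h : Fin d → β, F (Fin.cons b h) := by
  rw [← (Fin.consEquiv fun _ => β).sum_comp, Fintype.sum_prod_type]
  rfl

lemma expect_fin_cons {d : ℕ} {β : Type*} [Fintype β] (F : (Fin (d + 1) → β) → ℝ) :
    𝔼 g, F g = 𝔼 b, 𝔼 h : Fin d → β, F (Fin.cons b h) := by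
  rw [← expect_product', univ_product_univ]
  exact Fintype.expect_equiv (Fin.consEquiv fun _ => β).symm _ _ fun g =>
    congrArg F (Fin.cons_self_tail g).symm

def rademacherSum [Fintype ι] (w : ι → ℝ) (s : ι → Bool) : ℝ := ∑ i, w i * pmOne (s i)

lemma exists_rademacherSum_eq_sum_abs [Fintype ι] (w : ι → ℝ) :
    ∃ s, rademacherSum w s = ∑ i, |w i| := by
  refine ⟨fun i => decide (0 ≤ w i), sum_congr rfl fun i _ => ?_⟩
  by_cases h : 0 ≤ w i
  · simp [h, abs_of_nonneg]
  · simp [h, abs_of_neg (not_le.mp h)]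

section Symmetrization

variable [DecidableEq ι]

def flipAt (i : ι) (x : ι → Bool) : ι → Bool := Function.update x i (!x i)

lemma flipAt_involutive (i : ι) : Function.Involutive (flipAt i) := fun x => by
  simp [flipAt]

variable [Fintype ι]

lemma expect_pmOne_mul_add (i : ι) (a : ℝ) {R : (ι → Bool) → ℝ}
    (hR : ∀ x, R (flipAt i x) = R x) (g : ℝ → ℝ) :
    𝔼 x, g (a * pmOne (x i) + R x) = 𝔼 x, (g (a + R x) + g (R x - a)) / 2 := by
  have hflip : 𝔼 x, g (a * pmOne (flipAt i x i) + R (flipAt i x)) =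
      𝔼 x, g (a * pmOne (x i) + R x) :=
    Fintype.expect_equiv (flipAt_involutive i).toPerm _ _ fun _ => rfl
  have hpair : ∀ x, g (a * pmOne (x i) + R x) + g (a * pmOne (flipAt i x i) + R (flipAt i x)) =
      g (a + R x) + g (R x - a) := fun x => by
    rw [hR]
    simp only [flipAt, Function.update_self]
    cases x i <;> simp [add_comm, sub_eq_neg_add]
  rw [← expect_div, expect_congr rfl fun x _ => (hpair x).symm, expect_add_distrib, hflip]
  ring

lemma expect_sum_insert_pmOne (w : ι → ℝ) {i : ι} {t : Finset ι} (hi : i ∉ t) (g : ℝ → ℝ) :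
    𝔼 x : ι → Bool, g (∑ k ∈ insert i t, w k * pmOne (x k)) =
      𝔼 x : ι → Bool,
        (g (w i + ∑ k ∈ t, w k * pmOne (x k)) + g (∑ k ∈ t, w k * pmOne (x k) - w i)) / 2 := by
  simp_rw [sum_insert hi]
  refine expect_pmOne_mul_add i (w i) (fun x => sum_congr rfl fun k hk => ?_) g
  rw [flipAt, Function.update_of_ne (ne_of_mem_of_not_mem hk hi)]

lemma expect_sum_mul_pmOne_sq (w : ι → ℝ) (t : Finset ι) :
    𝔼 s : ι → Bool, (∑ i ∈ t, w i * pmOne (s i)) ^ 2 = ∑ i ∈ t, w i ^ 2 := by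
  induction t using Finset.induction_on with
  | empty => simp
  | insert i t hi ih =>
    rw [expect_sum_insert_pmOne w hi (· ^ 2), sum_insert hi, ← ih,
      ← expect_const (univ_nonempty (α := ι → Bool)) (w i ^ 2), ← expect_add_distrib]
    exact expect_congr rfl fun x _ => by ring

lemma expect_rademacherSum_sq (w : ι → ℝ) : 𝔼 s, rademacherSum w s ^ 2 = ∑ i, w i ^ 2 :=
  expect_sum_mul_pmOne_sq w univ

lemma expect_rademacherSum_pow_four_le (w : ι → ℝ) :
    𝔼 s, rademacherSum w s ^ 4 ≤ 3 * (∑ i, w i ^ 2) ^ 2 := by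
  suffices ∀ t : Finset ι,
      𝔼 s : ι → Bool, (∑ i ∈ t, w i * pmOne (s i)) ^ 4 ≤ 3 * (∑ i ∈ t, w i ^ 2) ^ 2 from this _
  intro t
  induction t using Finset.induction_on with
  | empty => simp
  | insert i t hi ih =>
    have hexp : 𝔼 x : ι → Bool, (∑ k ∈ insert i t, w k * pmOne (x k)) ^ 4 =
        w i ^ 4 + 6 * w i ^ 2 * 𝔼 x : ι → Bool, (∑ k ∈ t, w k * pmOne (x k)) ^ 2 +
          𝔼 x : ι → Bool, (∑ k ∈ t, w k * pmOne (x k)) ^ 4 := by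
      rw [expect_sum_insert_pmOne w hi (· ^ 4), mul_expect,
        ← expect_const (univ_nonempty (α := ι → Bool)) (w i ^ 4), ← expect_add_distrib,
        ← expect_add_distrib]
      exact expect_congr rfl fun x _ => by ring
    rw [hexp, expect_sum_mul_pmOne_sq, sum_insert hi]
    nlinarith [sq_nonneg (w i), sum_nonneg fun k (_ : k ∈ t) => sq_nonneg (w k)]

lemma expect_rademacherSum_mul (u v : ι → ℝ) :
    𝔼 s, rademacherSum u s * rademacherSum v s = ∑ i, u i * v i := by
  have hpol : ∀ s, rademacherSum u s * rademacherSum v s =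
      (rademacherSum (u + v) s ^ 2 - rademacherSum (u - v) s ^ 2) / 4 := fun s => by
    simp only [rademacherSum, Pi.add_apply, Pi.sub_apply, add_mul, sub_mul, sum_add_distrib,
      sum_sub_distrib]
    ring
  simp_rw [hpol, ← expect_div, expect_sub_distrib, expect_rademacherSum_sq, ← sum_sub_distrib,
    sum_div]
  exact sum_congr rfl fun i _ => by simp only [Pi.add_apply, Pi.sub_apply]; ring

end Symmetrization

lemma expect_sq_pow_three_le [Fintype κ] (f : κ → ℝ) :
    (𝔼 r, f r ^ 2) ^ 3 ≤ (𝔼 r, |f r|) ^ 2 * 𝔼 r, f r ^ 4 := by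
  have h := Real.compact_inner_le_weight_mul_Lp_of_nonneg univ (p := 3) (by norm_num)
    (fun r => abs_nonneg (f r)) (fun r => abs_nonneg (f r))
  have hsq : ∀ r, |f r| * |f r| = f r ^ 2 := fun r => by rw [← sq, sq_abs]
  have hfour : ∀ r, |f r| * |f r| ^ (3 : ℝ) = f r ^ 4 := fun r => by
    rw [show |f r| ^ (3 : ℝ) = |f r| ^ 3 by norm_cast, ← pow_succ', Even.pow_abs ⟨2, rfl⟩]
  simp only [hsq, hfour] at h
  have hA : 0 ≤ 𝔼 r, |f r| := expect_nonneg fun r _ => abs_nonneg _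
  have hB : 0 ≤ 𝔼 r, f r ^ 4 := expect_nonneg fun r _ => by positivity
  have hcube : ∀ {t : ℝ} (p : ℝ), 0 ≤ t → (t ^ p) ^ 3 = t ^ (3 * p) := fun p ht => by
    rw [← Real.rpow_natCast, ← Real.rpow_mul ht, mul_comm]; norm_num
  calc (𝔼 r, f r ^ 2) ^ 3
      ≤ ((𝔼 r, |f r|) ^ (1 - (3 : ℝ)⁻¹) * (𝔼 r, f r ^ 4) ^ (3 : ℝ)⁻¹) ^ 3 :=
        pow_le_pow_left₀ (expect_nonneg fun r _ => sq_nonneg _) h 3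
    _ = (𝔼 r, |f r|) ^ 2 * 𝔼 r, f r ^ 4 := by
        rw [mul_pow, hcube _ hA, hcube _ hB]
        norm_num

section DecoupledForm

variable [Fintype ι] {d : ℕ}

def decoupledForm (T : (Fin d → ι) → ℝ) (x : Fin d → ι → Bool) : ℝ :=
  ∑ f, T f * ∏ a, pmOne (x a (f a))

lemma decoupledForm_cons (T : (Fin (d + 1) → ι) → ℝ) (s : ι → Bool) (x : Fin d → ι → Bool) :
    decoupledForm T (Fin.cons s x) =
      rademacherSum (fun i => decoupledForm (fun h => T (Fin.cons i h)) x) s := by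
  rw [decoupledForm, sum_fin_cons, rademacherSum]
  refine sum_congr rfl fun i _ => ?_
  rw [decoupledForm, sum_mul]
  refine sum_congr rfl fun h _ => ?_
  simp only [Fin.prod_univ_succ, Fin.cons_zero, Fin.cons_succ]
  ring

lemma decoupledForm_cons' (T : (Fin (d + 1) → ι) → ℝ) (s : ι → Bool) (x : Fin d → ι → Bool) :
    decoupledForm T (Fin.cons s x) =
      decoupledForm (fun h => ∑ i, T (Fin.cons i h) * pmOne (s i)) x := by
  rw [decoupledForm_cons, rademacherSum, decoupledForm]
  simp only [decoupledForm, sum_mul]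
  rw [sum_comm]
  exact sum_congr rfl fun h _ => sum_congr rfl fun i _ => by ring

variable [DecidableEq ι]

lemma expect_decoupledForm_sq (T : (Fin d → ι) → ℝ) :
    𝔼 x, decoupledForm T x ^ 2 = ∑ f, T f ^ 2 := by
  induction d with
  | zero => simp [decoupledForm]
  | succ d ih =>
    rw [expect_fin_cons, expect_comm]
    simp_rw [decoupledForm_cons, expect_rademacherSum_sq]
    rw [expect_sum_comm, sum_fin_cons]
    simp_rw [ih]

lemma expect_decoupledForm_pow_four_le (T : (Fin d → ι) → ℝ) :
    𝔼 x, decoupledForm T x ^ 4 ≤ 3 ^ d * (∑ f, T f ^ 2) ^ 2 := by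
  induction d with
  | zero => simp [decoupledForm, ← pow_mul]
  | succ d ih =>
    set F := fun i (x : Fin d → ι → Bool) => decoupledForm (fun h => T (Fin.cons i h)) x
    set a := fun i => ∑ h : Fin d → ι, T (Fin.cons i h) ^ 2
    have h4 : ∀ i, 𝔼 x, (F i x ^ 2) ^ 2 ≤ 3 ^ d * a i ^ 2 := fun i => by
      simpa only [← pow_mul] using ih _
    have hcross : ∀ i j, 𝔼 x, F i x ^ 2 * F j x ^ 2 ≤ 3 ^ d * (a i * a j) := by
      intro i j
      refine le_of_abs_le (abs_le_of_sq_le_sq ?_ (by positivity))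
      calc (𝔼 x, F i x ^ 2 * F j x ^ 2) ^ 2
          ≤ (𝔼 x, (F i x ^ 2) ^ 2) * 𝔼 x, (F j x ^ 2) ^ 2 := expect_mul_sq_le_sq_mul_sq _ _ _
        _ ≤ (3 ^ d * a i ^ 2) * (3 ^ d * a j ^ 2) :=
          mul_le_mul (h4 i) (h4 j) (expect_nonneg fun _ _ => by positivity) (by positivity)
        _ = (3 ^ d * (a i * a j)) ^ 2 := by ring
    calc 𝔼 x, decoupledForm T x ^ 4
        = 𝔼 x, 𝔼 s, rademacherSum (fun i => F i x) s ^ 4 := by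
          rw [expect_fin_cons, expect_comm]
          simp_rw [decoupledForm_cons]
          rfl
      _ ≤ 𝔼 x, 3 * (∑ i, F i x ^ 2) ^ 2 :=
          expect_le_expect fun x _ => expect_rademacherSum_pow_four_le _
      _ = 3 * ∑ i, ∑ j, 𝔼 x, F i x ^ 2 * F j x ^ 2 := by
          simp_rw [← mul_expect, sq (∑ i, _), sum_mul_sum, expect_sum_comm]
      _ ≤ 3 * ∑ i, ∑ j, 3 ^ d * (a i * a j) := by
          gcongr with i _ j _
          exact hcross i j
      _ = 3 ^ (d + 1) * (∑ f, T f ^ 2) ^ 2 := by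
          rw [sum_fin_cons (fun f => T f ^ 2), sq, sum_mul_sum, mul_sum, mul_sum]
          refine sum_congr rfl fun i _ => ?_
          rw [mul_sum, mul_sum]
          exact sum_congr rfl fun j _ => by ring

lemma sum_sq_le_expect_abs_decoupledForm_sq (T : (Fin d → ι) → ℝ) :
    ∑ f, T f ^ 2 ≤ 3 ^ d * (𝔼 x, |decoupledForm T x|) ^ 2 := by
  have hholder := (expect_sq_pow_three_le (decoupledForm T)).trans
    (mul_le_mul_of_nonneg_left (expect_decoupledForm_pow_four_le T) (sq_nonneg _))
  rw [expect_decoupledForm_sq] at hholder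
  rcases (sum_nonneg fun f _ => sq_nonneg (T f)).eq_or_lt with hzero | hpos
  · rw [← hzero]
    positivity
  · refine le_of_mul_le_mul_right ?_ (pow_pos hpos 2)
    linear_combination hholder

lemma sum_abs_le_expect_abs_decoupledForm (T : (Fin d → ι) → ℝ) :
    ∑ f, |T f| ≤ √(3 * Fintype.card ι) ^ d * 𝔼 x, |decoupledForm T x| := by
  refine le_of_abs_le (abs_le_of_sq_le_sq ?_ (by positivity))
  calc (∑ f, |T f|) ^ 2 ≤ Fintype.card ι ^ d * ∑ f, T f ^ 2 := by
        simpa using sq_sum_le_card_mul_sum_sq (s := univ) (f := fun f => |T f|)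
    _ ≤ Fintype.card ι ^ d * (3 ^ d * (𝔼 x, |decoupledForm T x|) ^ 2) := by
        gcongr
        exact sum_sq_le_expect_abs_decoupledForm_sq T
    _ = (√(3 * Fintype.card ι) ^ d * 𝔼 x, |decoupledForm T x|) ^ 2 := by
        rw [mul_pow, ← pow_mul, mul_comm d, pow_mul, Real.sq_sqrt (by positivity)]
        ring

lemma exists_sum_abs_le_decoupledForm {k : ℕ} (S : (Fin (k + 1) → ι) → ℝ) :
    ∃ x, ∑ g, |S g| ≤ √(3 * Fintype.card ι) ^ k * decoupledForm S x := by
  set F := fun i (x : Fin k → ι → Bool) => decoupledForm (fun h => S (Fin.cons i h)) x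
  have hmodes : ∑ g, |S g| ≤ 𝔼 x, √(3 * Fintype.card ι) ^ k * ∑ i, |F i x| := by
    rw [sum_fin_cons, ← mul_expect, expect_sum_comm, mul_sum]
    exact sum_le_sum fun i _ => sum_abs_le_expect_abs_decoupledForm _
  obtain ⟨x, -, hx⟩ := exists_le_of_le_expect univ_nonempty hmodes
  obtain ⟨s, hs⟩ := exists_rademacherSum_eq_sum_abs (fun i => F i x)
  exact ⟨Fin.cons s x, by rwa [decoupledForm_cons, hs]⟩

end DecoupledForm

lemma sum_cons_mul_pmOne_le_iSup_decoupledForm [Fintype ι] [DecidableEq ι] {k : ℕ}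
    (T : (Fin (k + 2) → ι) → ℝ) (ε : ι → Bool) (η : (Fin (k + 1) → ι) → Bool) :
    ∑ i, ∑ g, T (Fin.cons i g) * (pmOne (ε i) * pmOne (η g)) ≤
      √(3 * Fintype.card ι) ^ k * ⨆ x, decoupledForm T x := by
  set S := fun g => ∑ i, T (Fin.cons i g) * pmOne (ε i)
  obtain ⟨x, hx⟩ := exists_sum_abs_le_decoupledForm S
  calc ∑ i, ∑ g, T (Fin.cons i g) * (pmOne (ε i) * pmOne (η g))
      = ∑ g, pmOne (η g) * S g := by
        rw [sum_comm]
        simp_rw [S, mul_sum]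
        exact sum_congr rfl fun g _ => sum_congr rfl fun i _ => by ring
    _ ≤ ∑ g, |S g| := sum_le_sum fun g _ => pmOne_mul_le_abs _ _
    _ ≤ √(3 * Fintype.card ι) ^ k * decoupledForm T (Fin.cons ε x) := by
        rwa [decoupledForm_cons']
    _ ≤ √(3 * Fintype.card ι) ^ k * ⨆ x, decoupledForm T x := by
        gcongr
        exact le_ciSup (Set.finite_range _).bddAbove _

def truncate (c t : ℝ) : ℝ := max (-c) (min c t)

lemma abs_truncate_le {c : ℝ} (hc : 0 ≤ c) (t : ℝ) : |truncate c t| ≤ c :=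
  abs_le.mpr ⟨le_max_left _ _, max_le (by linarith) (min_le_left _ _)⟩

lemma truncate_sq_le {c : ℝ} (hc : 0 ≤ c) (t : ℝ) : truncate c t ^ 2 ≤ t ^ 2 := by
  unfold truncate
  rcases le_total t (-c) with h | h
  · rw [min_eq_right (by linarith), max_eq_left h]
    nlinarith
  rcases le_total c t with h' | h'
  · rw [min_eq_left h', max_eq_right (by linarith)]
    nlinarith
  · rw [min_eq_right h', max_eq_right h]

lemma sub_truncate_sq_mul_le {c : ℝ} (hc : 0 ≤ c) (t : ℝ) :
    (t - truncate c t) ^ 2 * c ^ 2 ≤ t ^ 4 := by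
  unfold truncate
  rcases le_total t (-c) with h | h
  · rw [min_eq_right (by linarith), max_eq_left h]
    have h1 : (t + c) ^ 2 ≤ t ^ 2 := by nlinarith
    have h2 : c ^ 2 ≤ t ^ 2 := by nlinarith
    nlinarith [mul_le_mul h1 h2 (sq_nonneg c) (sq_nonneg t)]
  rcases le_total c t with h' | h'
  · rw [min_eq_left h', max_eq_right (by linarith)]
    have h1 : (t - c) ^ 2 ≤ t ^ 2 := by nlinarith
    have h2 : c ^ 2 ≤ t ^ 2 := by nlinarith
    nlinarith [mul_le_mul h1 h2 (sq_nonneg c) (sq_nonneg t)]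
  · rw [min_eq_right h', max_eq_right h, sub_self, zero_pow two_ne_zero, zero_mul]
    positivity

section BilinearForms

variable {ι₁ ι₂ : Type*} [Fintype ι₁] [Fintype ι₂]

/-- Values of the vector relaxation of `max_{ε,η} ∑ i, ∑ j, A i j * εᵢ * ηⱼ`. -/
def sdpValues (A : ι₁ → ι₂ → ℝ) : Set ℝ :=
  {t | ∃ (m : ℕ) (u : ι₁ → Fin m → ℝ) (v : ι₂ → Fin m → ℝ), (∀ i, ∑ r, u i r ^ 2 ≤ 1) ∧
    (∀ j, ∑ r, v j r ^ 2 ≤ 1) ∧ t = ∑ i, ∑ j, A i j * ∑ r, u i r * v j r}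

lemma zero_mem_sdpValues (A : ι₁ → ι₂ → ℝ) : 0 ∈ sdpValues A :=
  ⟨0, 0, 0, by simp, by simp, by simp⟩

lemma bddAbove_sdpValues (A : ι₁ → ι₂ → ℝ) : BddAbove (sdpValues A) := by
  refine ⟨∑ i, ∑ j, |A i j|, ?_⟩
  rintro t ⟨m, u, v, hu, hv, rfl⟩
  gcongr with i _ j _
  have hinner : |∑ r, u i r * v j r| ≤ 1 := by
    refine abs_le_of_sq_le_sq ((sum_mul_sq_le_sq_mul_sq _ _ _).trans ?_) zero_le_one
    simpa using mul_le_one₀ (hu i) (sum_nonneg fun r _ => sq_nonneg _) (hv j)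
  calc A i j * ∑ r, u i r * v j r ≤ |A i j| * |∑ r, u i r * v j r| :=
        (le_abs_self _).trans (abs_mul _ _).le
    _ ≤ |A i j| := mul_le_of_le_one_right (abs_nonneg _) hinner

lemma sum_expect_mem_sdpValues (A : ι₁ → ι₂ → ℝ) [Fintype κ]
    (p : ι₁ → κ → ℝ) (q : ι₂ → κ → ℝ) (hp : ∀ i, 𝔼 r, p i r ^ 2 ≤ 1)
    (hq : ∀ j, 𝔼 r, q j r ^ 2 ≤ 1) :
    ∑ i, ∑ j, A i j * 𝔼 r, p i r * q j r ∈ sdpValues A := by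
  set e := Fintype.equivFin κ
  set N := Fintype.card κ
  have hgram : ∀ f g : κ → ℝ,
      ∑ r, f (e.symm r) / √N * (g (e.symm r) / √N) = 𝔼 r, f r * g r := fun f g => by
    rw [Fintype.expect_eq_sum_div_card, sum_div, ← e.symm.sum_comp]
    refine sum_congr rfl fun r _ => ?_
    rw [div_mul_div_comm, Real.mul_self_sqrt (Nat.cast_nonneg _)]
  refine ⟨N, fun i r => p i (e.symm r) / √N, fun j r => q j (e.symm r) / √N,
    fun i => ?_, fun j => ?_, by simp_rw [hgram]⟩
  · simpa only [sq, hgram] using hp i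
  · simpa only [sq, hgram] using hq j

lemma sum_expect_mul_le (A : ι₁ → ι₂ → ℝ) [Fintype κ]
    (p : ι₁ → κ → ℝ) (q : ι₂ → κ → ℝ) {a b : ℝ} (ha : 0 < a) (hb : 0 < b)
    (hp : ∀ i, 𝔼 r, p i r ^ 2 ≤ a ^ 2) (hq : ∀ j, 𝔼 r, q j r ^ 2 ≤ b ^ 2) :
    ∑ i, ∑ j, A i j * 𝔼 r, p i r * q j r ≤ a * b * sSup (sdpValues A) := by
  have hmem := sum_expect_mem_sdpValues A (fun i r => p i r / a) (fun j r => q j r / b)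
    (fun i => by simpa [div_pow, ← expect_div, div_le_one (pow_pos ha 2)] using hp i)
    (fun j => by simpa [div_pow, ← expect_div, div_le_one (pow_pos hb 2)] using hq j)
  calc ∑ i, ∑ j, A i j * 𝔼 r, p i r * q j r
      = a * b * ∑ i, ∑ j, A i j * 𝔼 r, p i r / a * (q j r / b) := by
        simp_rw [div_mul_div_comm, ← expect_div, mul_sum]
        exact sum_congr rfl fun i _ => sum_congr rfl fun j _ => by field_simp
    _ ≤ a * b * sSup (sdpValues A) := by
        gcongr
        exact le_csSup (bddAbove_sdpValues A) hmem

lemma sum_mul_mul_le_of_abs_le (A : ι₁ → ι₂ → ℝ) {B c : ℝ}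
    (hB : ∀ (ε : ι₁ → Bool) (η : ι₂ → Bool), ∑ i, ∑ j, A i j * (pmOne (ε i) * pmOne (η j)) ≤ B)
    (hc : 0 ≤ c)
    (a : ι₁ → ℝ) (b : ι₂ → ℝ) (ha : ∀ i, |a i| ≤ c) (hb : ∀ j, |b j| ≤ c) :
    ∑ i, ∑ j, A i j * (a i * b j) ≤ c ^ 2 * B := by
  set w := fun j => ∑ i, A i j * a i
  obtain ⟨η, hη⟩ := exists_rademacherSum_eq_sum_abs w
  set z := fun i => ∑ j, A i j * pmOne (η j)
  obtain ⟨ε, hε⟩ := exists_rademacherSum_eq_sum_abs z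
  calc ∑ i, ∑ j, A i j * (a i * b j) = ∑ j, w j * b j := by
        rw [sum_comm]
        simp_rw [w, sum_mul]
        exact sum_congr rfl fun j _ => sum_congr rfl fun i _ => by ring
    _ ≤ c * ∑ j, |w j| := sum_mul_le_mul_sum_abs w b hb
    _ = c * ∑ i, z i * a i := by
        rw [← hη, rademacherSum]
        simp_rw [w, z, sum_mul]
        rw [sum_comm]
        exact congrArg _ (sum_congr rfl fun i _ => sum_congr rfl fun j _ => by ring)
    _ ≤ c * (c * ∑ i, |z i|) := by
        gcongr
        exact sum_mul_le_mul_sum_abs z a ha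
    _ = c ^ 2 * ∑ i, ∑ j, A i j * (pmOne (ε i) * pmOne (η j)) := by
        rw [← hε, rademacherSum, ← mul_assoc, ← sq]
        simp_rw [z, sum_mul]
        exact congrArg _ (sum_congr rfl fun i _ => sum_congr rfl fun j _ => by ring)
    _ ≤ c ^ 2 * B := by
        gcongr
        exact hB ε η

lemma expect_sub_truncate_sq_le [Fintype ι] [DecidableEq ι] (u : ι → ℝ)
    (hu : ∑ i, u i ^ 2 ≤ 1) :
    𝔼 s, (rademacherSum u s - truncate 8 (rademacherSum u s)) ^ 2 ≤ (1 / 4) ^ 2 := by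
  calc 𝔼 s, (rademacherSum u s - truncate 8 (rademacherSum u s)) ^ 2
      ≤ 𝔼 s, rademacherSum u s ^ 4 / 8 ^ 2 := expect_le_expect fun s _ =>
        (le_div_iff₀ (by norm_num)).mpr (sub_truncate_sq_mul_le (by norm_num) _)
    _ ≤ 3 * (∑ i, u i ^ 2) ^ 2 / 8 ^ 2 := by
        rw [← expect_div]
        gcongr
        exact expect_rademacherSum_pow_four_le u
    _ ≤ (1 / 4) ^ 2 := by
        have := pow_le_one₀ (sum_nonneg fun i _ => sq_nonneg (u i)) hu (n := 2)
        linarith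

/-- Write `⟨u, v⟩ = 𝔼 X_u X_v` with Rademacher sums and truncate these at `8`: the truncated part is
a bilinear form on a box, at most `64 B`, and the tails have `L²`-norm at most `1/4` by the
fourth-moment bound, so they contribute at most half of `sSup (sdpValues A)`. -/
theorem grothendieck_inequality (A : ι₁ → ι₂ → ℝ) {B : ℝ}
    (hB : ∀ (ε : ι₁ → Bool) (η : ι₂ → Bool), ∑ i, ∑ j, A i j * (pmOne (ε i) * pmOne (η j)) ≤ B)
    {t : ℝ} (ht : t ∈ sdpValues A) : t ≤ 128 * B := by
  set γ := sSup (sdpValues A)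
  have hhalf : ∀ t ∈ sdpValues A, t ≤ 64 * B + γ / 2 := by
    rintro _ ⟨m, u, v, hu, hv, rfl⟩
    set X := fun i => rademacherSum (u i)
    set Y := fun j => rademacherSum (v j)
    have hX : ∀ i, 𝔼 s, X i s ^ 2 ≤ 1 ^ 2 := fun i => by
      rw [one_pow, expect_rademacherSum_sq]
      exact hu i
    have hY : ∀ j, 𝔼 s, Y j s ^ 2 ≤ 1 ^ 2 := fun j => by
      rw [one_pow, expect_rademacherSum_sq]
      exact hv j
    have hsplit : ∀ i j, ∑ r, u i r * v j r =
        𝔼 s, truncate 8 (X i s) * truncate 8 (Y j s) +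
          𝔼 s, (X i s - truncate 8 (X i s)) * Y j s +
          𝔼 s, truncate 8 (X i s) * (Y j s - truncate 8 (Y j s)) := fun i j => by
      rw [← expect_rademacherSum_mul, ← expect_add_distrib, ← expect_add_distrib]
      exact expect_congr rfl fun s _ => by ring
    have hbox : ∑ i, ∑ j, A i j * 𝔼 s, truncate 8 (X i s) * truncate 8 (Y j s) ≤ 64 * B := by
      simp_rw [mul_expect, ← expect_sum_comm]
      refine expect_le univ_nonempty fun s _ => ?_
      have := sum_mul_mul_le_of_abs_le A hB (c := 8) (by norm_num) _ _
        (fun i => abs_truncate_le (by norm_num) (X i s))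
        (fun j => abs_truncate_le (by norm_num) (Y j s))
      linarith
    have htailX := sum_expect_mul_le A (fun i s => X i s - truncate 8 (X i s)) Y
      (by norm_num) one_pos (fun i => expect_sub_truncate_sq_le _ (hu i)) hY
    have htailY := sum_expect_mul_le A (fun i s => truncate 8 (X i s))
      (fun j s => Y j s - truncate 8 (Y j s)) one_pos (by norm_num : (0 : ℝ) < 1 / 4)
      (fun i => (expect_le_expect fun s _ => truncate_sq_le (by norm_num) _).trans (hX i))
      (fun j => expect_sub_truncate_sq_le _ (hv j))
    simp_rw [hsplit, mul_add, sum_add_distrib]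
    linarith
  have hγ : γ ≤ 64 * B + γ / 2 := csSup_le ⟨0, zero_mem_sdpValues A⟩ hhalf
  linarith [le_csSup (bddAbove_sdpValues A) ht]

lemma sum_mul_map_mem_sdpValues {R : Type*} [CommRing R] [Module ℝ R] [IsScalarTower ℝ R R]
    [SMulCommClass ℝ R R] (L : R →ₗ[ℝ] ℝ) (V : Submodule ℝ R) (hV : ∀ r ∈ V, 0 ≤ L (r ^ 2))
    (A : ι₁ → ι₂ → ℝ) (p : ι₁ → R) (q : ι₂ → R) (hpV : ∀ i, p i ∈ V) (hqV : ∀ j, q j ∈ V)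
    (hp : ∀ i, L (p i ^ 2) ≤ 1) (hq : ∀ j, L (q j ^ 2) ≤ 1) :
    ∑ i, ∑ j, A i j * L (p i * q j) ∈ sdpValues A := by
  set e : ι₁ ⊕ ι₂ → R := Sum.elim p q
  set G : Matrix (ι₁ ⊕ ι₂) (ι₁ ⊕ ι₂) ℝ := fun α β => L (e α * e β)
  have hG : G.PosSemidef := by
    refine .of_dotProduct_mulVec_nonneg ?_ fun c => ?_
    · ext α β
      rw [Matrix.conjTranspose_apply, star_trivial]
      exact congrArg L (mul_comm _ _)
    · have hquad : dotProduct (star c) (G.mulVec c) = L ((∑ α, c α • e α) ^ 2) := by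
        simp_rw [sq, sum_mul_sum, map_sum, smul_mul_smul_comm, map_smul, dotProduct, Matrix.mulVec,
          dotProduct, mul_sum, star_trivial, smul_eq_mul, G]
        exact sum_congr rfl fun α _ => sum_congr rfl fun β _ => by ring
      rw [hquad]
      refine hV _ (V.sum_mem fun α _ => V.smul_mem _ ?_)
      cases α
      exacts [hpV _, hqV _]
  obtain ⟨m, B, hB⟩ := Matrix.posSemidef_iff_eq_sum_vecMulVec.mp hG
  have hentry : ∀ α β, L (e α * e β) = ∑ x, B x α * B x β := fun α β => by
    simpa [G, Matrix.vecMulVec_apply, Matrix.sum_apply] using congrFun (congrFun hB α) β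
  refine ⟨m, fun i x => B x (.inl i), fun j x => B x (.inr j), fun i => ?_, fun j => ?_, ?_⟩
  · simp_rw [sq, ← hentry]
    simpa [e, sq] using hp i
  · simp_rw [sq, ← hentry]
    simpa [e, sq] using hq j
  · simp_rw [← hentry]
    rfl

end BilinearForms

lemma map_sq_prod_X {σ : Type*} (L : MvPolynomial σ ℝ →ₗ[ℝ] ℝ) {D : ℕ}
    (hL : ∀ v (p : MvPolynomial σ ℝ), p.totalDegree ≤ D → L (X v ^ 2 * p) = L p)
    (φ : ι → σ) (s : Finset ι) (hs : 2 * #s ≤ D + 2) : L ((∏ i ∈ s, X (φ i)) ^ 2) = L 1 := by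
  classical
  induction s using Finset.induction_on with
  | empty => simp
  | insert i s hi ih =>
    rw [card_insert_of_notMem hi] at hs
    rw [prod_insert hi, mul_pow, hL _ _ ?_, ih (by omega)]
    calc ((∏ i ∈ s, X (φ i)) ^ 2 : MvPolynomial σ ℝ).totalDegree
        ≤ 2 * (∏ i ∈ s, X (φ i) : MvPolynomial σ ℝ).totalDegree := totalDegree_pow _ _
      _ ≤ 2 * ∑ i ∈ s, (X (φ i) : MvPolynomial σ ℝ).totalDegree := by
        gcongr
        exact totalDegree_finsetProd _ _
      _ ≤ D := by simp only [totalDegree_X, sum_const, smul_eq_mul, mul_one]; omega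

lemma sum_C_mul_prod_X_eq [Fintype ι] {k : ℕ} (T : (Fin (k + 1) → ι) → ℝ) :
    ∑ f, C (T f) * ∏ a, (X (a, f a) : MvPolynomial (Fin (k + 1) × ι) ℝ) =
      ∑ i, ∑ g, C (T (Fin.cons i g)) * (X (0, i) * ∏ a, X (a.succ, g a)) := by
  rw [sum_fin_cons]
  simp only [Fin.prod_univ_succ, Fin.cons_zero, Fin.cons_succ]

lemma map_sum_C_mul_prod_X_mem_sdpValues [Fintype ι] {k : ℕ}
    (T : (Fin (k + 2) → ι) → ℝ) (L : MvPolynomial (Fin (k + 2) × ι) ℝ →ₗ[ℝ] ℝ) (hL1 : L 1 = 1)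
    (hLsq : ∀ p : MvPolynomial (Fin (k + 2) × ι) ℝ, p.totalDegree ≤ k + 2 → 0 ≤ L (p ^ 2))
    (hLsub : ∀ v (p : MvPolynomial (Fin (k + 2) × ι) ℝ),
      p.totalDegree ≤ 2 * k + 2 → L (X v ^ 2 * p) = L p) :
    L (∑ f, C (T f) * ∏ a, X (a, f a)) ∈
      sdpValues fun (i : ι) (g : Fin (k + 1) → ι) => T (Fin.cons i g) := by
  let V := restrictTotalDegree (Fin (k + 2) × ι) ℝ (k + 2)
  let p : ι → MvPolynomial (Fin (k + 2) × ι) ℝ := fun i => X (0, i)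
  let q : (Fin (k + 1) → ι) → MvPolynomial (Fin (k + 2) × ι) ℝ := fun g => ∏ a, X (a.succ, g a)
  have hpV : ∀ i, p i ∈ V := fun i => by simp [V, p, mem_restrictTotalDegree]
  have hqV : ∀ g, q g ∈ V := fun g => by
    rw [mem_restrictTotalDegree]
    refine (totalDegree_finsetProd _ _).trans ?_
    simp
  have hp : ∀ i, L (p i ^ 2) ≤ 1 := fun i => by
    simpa [p, hL1] using (hLsub (0, i) 1 (by simp)).le
  have hq : ∀ g, L (q g ^ 2) ≤ 1 := fun g =>
    ((map_sq_prod_X L hLsub (fun a : Fin (k + 1) => (a.succ, g a)) univ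
      (by simp; omega)).trans hL1).le
  have hval : L (∑ f, C (T f) * ∏ a, X (a, f a)) = ∑ i, ∑ g, T (Fin.cons i g) * L (p i * q g) := by
    simp_rw [sum_C_mul_prod_X_eq, map_sum, C_mul', map_smul, smul_eq_mul]
    rfl
  rw [hval]
  exact sum_mul_map_mem_sdpValues L V (fun r hr => hLsq r ((mem_restrictTotalDegree _ _ _).mp hr))
    _ p q hpV hqV hp hq

end DecoupledSoS

end

open DecoupledSoS

/-- **Integrality gap of the degree-`2d` SoS relaxation of decoupled degree-`d`
polynomial maximization over the hypercube is `O(n^{d/2−1})`.** For each `d ≥ 3` there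
is `C(d) > 0` such that every degree-`2d` pseudo-expectation over `{±1}^{dn}` in the
variables indexed by `Fin d × Fin n` assigns the decoupled degree-`d` objective at most
`C(d) · n^{d/2−1}` times its true maximum over the hypercube. -/
theorem stmt_18 (d : ℕ) (hd : 3 ≤ d) :
    ∃ C : ℝ, 0 < C ∧ ∀ (n : ℕ), 1 ≤ n → ∀ (T : (Fin d → Fin n) → ℝ)
      (L : MvPolynomial (Fin d × Fin n) ℝ →ₗ[ℝ] ℝ),
      L 1 = 1 →
      (∀ p : MvPolynomial (Fin d × Fin n) ℝ, 2 * p.totalDegree ≤ 2 * d → 0 ≤ L (p ^ 2)) →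
      (∀ (v : Fin d × Fin n) (p : MvPolynomial (Fin d × Fin n) ℝ),
        p.totalDegree ≤ 2 * d - 2 → L ((X v) ^ 2 * p) = L p) →
      L (∑ f : Fin d → Fin n, MvPolynomial.C (T f) * ∏ a, X (a, f a)) ≤
        C * (n : ℝ) ^ ((d : ℝ) / 2 - 1) *
          ⨆ x : Fin d → Fin n → Bool,
            ∑ f : Fin d → Fin n, T f * ∏ a, (if x a (f a) then (1 : ℝ) else -1) := by
  obtain ⟨k, rfl⟩ : ∃ k, d = k + 2 := ⟨d - 2, by omega⟩
  refine ⟨128 * √3 ^ k, by positivity, fun n _ T L hL1 hLsq hLsub => ?_⟩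
  have hmem := map_sum_C_mul_prod_X_mem_sdpValues T L hL1 (fun p hp => hLsq p (by omega))
    (fun v p hp => hLsub v p (by omega))
  have hgroth := grothendieck_inequality _ (sum_cons_mul_pmOne_le_iSup_decoupledForm T) hmem
  have hpow : (n : ℝ) ^ (((k + 2 : ℕ) : ℝ) / 2 - 1) = √n ^ k := by
    rw [show ((k + 2 : ℕ) : ℝ) / 2 - 1 = 1 / 2 * k by push_cast; ring,
      Real.rpow_mul (Nat.cast_nonneg _), Real.rpow_natCast, Real.sqrt_eq_rpow]
  calc L (∑ f, C (T f) * ∏ a, X (a, f a))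
      ≤ 128 * (√(3 * n) ^ k * ⨆ x, decoupledForm T x) := by simpa using hgroth
    _ = 128 * √3 ^ k * √n ^ k * ⨆ x, decoupledForm T x := by
        rw [Real.sqrt_mul (by norm_num), mul_pow]
        ring
    _ = _ := by
        rw [hpow]
        rfl
end

section
/- Let n ≥ 2 be an even integer and let Q = I_n − 𝟙𝟙ᵀ ∈ ℝ^{n×n}, where 𝟙 is the all-ones vector (so Q has zero diagonal and all off-diagonal entries equal to −1). Then max over x ∈ {−1,1}^n of xᵀQx equals n, while max over x, y ∈ {−1,1}^n of xᵀQy equals n² − n. In particular, the decoupled maximum exceeds the coupled maximum by a factor of n − 1. -/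
/-!
With `Q = I - 𝟙𝟙ᵀ` one has `xᵀQy = ⟨x, y⟩ - (∑ xᵢ)(∑ yⱼ)`. For sign vectors this gives
`xᵀQx = n - (∑ xᵢ)² ≤ n`, with equality at a balanced sign vector, which exists because `n` is
even. In the decoupled form each of the `n² - n` off-diagonal terms `xᵢ Qᵢⱼ yⱼ` is at most
`|Qᵢⱼ| = 1`, and all of them equal `1` at `x = 𝟙`, `y = -𝟙`.
-/

open Finset

lemma ciSup_eq_of_forall_le_of_eq {ι α : Type*} [Finite ι] [ConditionallyCompleteLinearOrder α]
    {f : ι → α} {a : α} (hle : ∀ i, f i ≤ a) (i₀ : ι) (h₀ : f i₀ = a) : ⨆ i, f i = a :=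
  haveI : Nonempty ι := ⟨i₀⟩
  le_antisymm (ciSup_le hle) (h₀ ▸ le_ciSup (Set.finite_range f).bddAbove i₀)

def spin (b : Bool) : ℝ := if b then 1 else -1

lemma spin_mul_self (b : Bool) : spin b * spin b = 1 := by
  cases b <;> norm_num [spin]

lemma abs_spin (b : Bool) : |spin b| = 1 := by
  cases b <;> norm_num [spin]

lemma sum_spin_lt_eq_zero (m : ℕ) : ∑ i : Fin (m + m), spin (decide ((i : ℕ) < m)) = 0 := by
  simp [Fin.sum_univ_add, spin]

section

variable {ι : Type*} [Fintype ι]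

lemma sum_sum_mul_mul_le_sum_sum_abs {Q : Matrix ι ι ℝ} {u v : ι → ℝ}
    (hu : ∀ i, |u i| ≤ 1) (hv : ∀ j, |v j| ≤ 1) :
    ∑ i, ∑ j, u i * Q i j * v j ≤ ∑ i, ∑ j, |Q i j| := by
  gcongr ∑ i, ∑ j, ?_ with i _ j _
  calc u i * Q i j * v j ≤ |u i * Q i j * v j| := le_abs_self _
    _ = |u i| * |Q i j| * |v j| := by rw [abs_mul, abs_mul]
    _ ≤ 1 * |Q i j| * 1 := by gcongr <;> simp [hu, hv]
    _ = |Q i j| := by ring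

variable [DecidableEq ι] {R : Type*} [CommRing R] {Q : Matrix ι ι R}

lemma sum_sum_mul_mul_eq_of_offDiag_neg_one (hQ : ∀ i j, Q i j = if i = j then 0 else -1)
    (u v : ι → R) :
    ∑ i, ∑ j, u i * Q i j * v j = ∑ i, u i * v i - (∑ i, u i) * ∑ j, v j := by
  have hterm : ∀ i j, u i * Q i j * v j = (if i = j then u i * v j else 0) - u i * v j := by
    intro i j
    by_cases h : i = j <;> simp [hQ, h]
  simp only [hterm, sum_sub_distrib, sum_ite_eq, mem_univ, if_true, sum_mul_sum]

lemma sum_sum_mul_mul_self_eq_of_offDiag_neg_one (hQ : ∀ i j, Q i j = if i = j then 0 else -1)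
    {u : ι → R} (hu : ∀ i, u i * u i = 1) :
    ∑ i, ∑ j, u i * Q i j * u j = Fintype.card ι - (∑ i, u i) ^ 2 := by
  simp [sum_sum_mul_mul_eq_of_offDiag_neg_one hQ, hu, sq]

lemma sum_sum_eq_of_offDiag_neg_one (hQ : ∀ i j, Q i j = if i = j then 0 else -1) :
    ∑ i, ∑ j, Q i j = Fintype.card ι - (Fintype.card ι : R) ^ 2 := by
  simpa [sq] using sum_sum_mul_mul_eq_of_offDiag_neg_one hQ (fun _ => 1) (fun _ => 1)

end

theorem stmt_19_general (n : ℕ) (hne : Even n)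
    (Q : Matrix (Fin n) (Fin n) ℝ)
    (hQ : ∀ i j, Q i j = if i = j then 0 else -1) :
    (⨆ x : Fin n → Bool, ∑ i, ∑ j,
        (if x i then (1 : ℝ) else -1) * Q i j * (if x j then (1 : ℝ) else -1)) = n ∧
    (⨆ x : Fin n → Bool, ⨆ y : Fin n → Bool, ∑ i, ∑ j,
        (if x i then (1 : ℝ) else -1) * Q i j * (if y j then (1 : ℝ) else -1)) =
      (n : ℝ) ^ 2 - n := by
  have hcoupled (x : Fin n → Bool) : ∑ i, ∑ j, spin (x i) * Q i j * spin (x j) =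
      n - (∑ i, spin (x i)) ^ 2 := by
    simpa using sum_sum_mul_mul_self_eq_of_offDiag_neg_one hQ (fun i => spin_mul_self (x i))
  have habs : ∑ i, ∑ j, |Q i j| = (n : ℝ) ^ 2 - n := by
    have hneg : ∀ i j, |Q i j| = -Q i j := fun i j => by by_cases h : i = j <;> simp [hQ, h]
    simp only [hneg, sum_neg_distrib, sum_sum_eq_of_offDiag_neg_one hQ, Fintype.card_fin]
    ring
  have hdecoupled (x y : Fin n → Bool) : ∑ i, ∑ j, spin (x i) * Q i j * spin (y j) ≤ n ^ 2 - n :=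
    habs ▸ sum_sum_mul_mul_le_sum_sum_abs (fun i => (abs_spin _).le) (fun j => (abs_spin _).le)
  obtain ⟨m, rfl⟩ := hne
  refine ⟨ciSup_eq_of_forall_le_of_eq (fun x => ?_) (fun i => decide ((i : ℕ) < m)) ?_,
    ciSup_eq_of_forall_le_of_eq (fun x => ciSup_le (hdecoupled x)) (fun _ => true)
      (ciSup_eq_of_forall_le_of_eq (hdecoupled _) (fun _ => false) ?_)⟩
  · exact (hcoupled x).trans_le (sub_le_self _ (sq_nonneg _))
  · exact (hcoupled _).trans (by rw [sum_spin_lt_eq_zero]; ring)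
  · simp only [if_true, Bool.false_eq_true, if_false, one_mul, mul_neg_one,
      sum_neg_distrib, sum_sum_eq_of_offDiag_neg_one hQ, Fintype.card_fin]
    ring

/-- **Impossibility of decoupling for quadratics.** For even `n ≥ 2` and
`Q = I_n − 𝟙𝟙ᵀ` (zero diagonal, off-diagonal entries `−1`), the maximum of the coupled
quadratic form `xᵀQx` over `{±1}^n` is `n`, while the maximum of the decoupled form
`xᵀQy` over `{±1}^n × {±1}^n` is `n² − n`: a gap of factor `n − 1`. -/
theorem stmt_19 (n : ℕ) (hn : 2 ≤ n) (hne : Even n)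
    (Q : Matrix (Fin n) (Fin n) ℝ)
    (hQ : ∀ i j, Q i j = if i = j then 0 else -1) :
    (⨆ x : Fin n → Bool, ∑ i, ∑ j,
        (if x i then (1 : ℝ) else -1) * Q i j * (if x j then (1 : ℝ) else -1)) = n ∧
    (⨆ x : Fin n → Bool, ⨆ y : Fin n → Bool, ∑ i, ∑ j,
        (if x i then (1 : ℝ) else -1) * Q i j * (if y j then (1 : ℝ) else -1)) =
      (n : ℝ) ^ 2 - n :=
  stmt_19_general n hne Q hQ
end
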